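/- Local parameterization of the reverse 4-shock polar by shock speed: let γ>1, let U_a=(u_a,v_a,p_a,ρ_a) and U₂=(u₂,0,p₂,ρ₂) be states with ρ_a,ρ₂>0, p_a,p₂>0, u₂>c₂ where c₂=√(γp₂/ρ₂), and let σ₄₀ satisfy 0 < σ₄₀ < λ₄(U₂) (λ₄(U₂) = c₂/√(u₂²−c₂²)) and the Rankine–Hugoniot conditions σ₄₀·(W(U_a)−W(U₂)) = H(U_a)−H(U₂). Then there exist open neighborhoods N₁ of σ₄₀ in ℝ, N₂ of U_a in ℝ⁴, N₃ of U₂ in ℝ⁴, and a continuously differentiable map G₄ : N₁×N₂ → N₃ with G₄(σ₄₀,U_a)=U₂ such that for all (σ,U₀) ∈ N₁×N₂ and all U ∈ N₃: σ·(W(U₀)−W(U)) = H(U₀)−H(U) if and only if U = G₄(σ,U₀). -/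

import Mathlib

/-!
The Rankine–Hugoniot conditions say that `σ W - H` takes the same value on both sides of the
shock. Wherever `ρ ≠ 0` this map is the polynomial
`(m, m u + σ p, m v - p, (σ u - v) (γ p / (γ - 1) + ρ (u² + v²) / 2))`, `m = ρ (σ u - v)` being
the mass flux across the shock. Its Jacobian at a state `(u, 0, p, ρ ≠ 0)` is invertible when
`σ u ≠ 0` and `σ² u² ρ ≠ γ p (1 + σ²)`, i.e. the velocity component `σ u / √(1 + σ²)` normal to
the shock is not sonic; `0 < σ₄₀ < λ₄(U₂)` makes it subsonic at `U₂`. The implicit function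
theorem, applied to the difference of this polynomial between the two states, yields `G₄`.
-/

noncomputable section

/-- The flux map `W` of the 2-D steady full Euler system,
with state `U = (u, v, p, ρ)`. -/
def Wf (γ : ℝ) (U : Fin 4 → ℝ) : Fin 4 → ℝ :=
  ![U 3 * U 0,
    U 3 * U 0 ^ 2 + U 2,
    U 3 * U 0 * U 1,
    U 3 * U 0 * (γ * U 2 / ((γ - 1) * U 3) + (U 0 ^ 2 + U 1 ^ 2) / 2)]

/-- The flux map `H` of the 2-D steady full Euler system. -/
def Hf (γ : ℝ) (U : Fin 4 → ℝ) : Fin 4 → ℝ :=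
  ![U 3 * U 1,
    U 3 * U 0 * U 1,
    U 3 * U 1 ^ 2 + U 2,
    U 3 * U 1 * (γ * U 2 / ((γ - 1) * U 3) + (U 0 ^ 2 + U 1 ^ 2) / 2)]

open Set Filter Topology

section ImplicitFunction

variable {𝕜 : Type*} [RCLike 𝕜]
  {E₁ : Type*} [NormedAddCommGroup E₁] [NormedSpace 𝕜 E₁] [CompleteSpace E₁]
  {E₂ : Type*} [NormedAddCommGroup E₂] [NormedSpace 𝕜 E₂] [CompleteSpace E₂]
  {F : Type*} [NormedAddCommGroup F] [NormedSpace 𝕜 F] [CompleteSpace F]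

theorem ContDiffAt.exists_isOpen_implicitFunction {f : E₁ × E₂ → F} {u : E₁ × E₂} {n : ℕ}
    (hf : ContDiffAt 𝕜 n f u) (hn : n ≠ 0) (hf₂ : (fderiv 𝕜 f u ∘L .inr 𝕜 E₁ E₂).IsInvertible)
    {V₀ : Set E₁} {N₀ : Set E₂} (hV₀ : V₀ ∈ 𝓝 u.1) (hN₀ : N₀ ∈ 𝓝 u.2) :
    ∃ V ⊆ V₀, ∃ N ⊆ N₀, IsOpen V ∧ IsOpen N ∧ u.1 ∈ V ∧ u.2 ∈ N ∧
      ∃ ψ : E₁ → E₂, ContDiffOn 𝕜 n ψ V ∧ ψ u.1 = u.2 ∧ MapsTo ψ V N ∧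
        ∀ x ∈ V, ∀ y ∈ N, (f (x, y) = f u ↔ y = ψ x) := by
  have hn' : (n : WithTop ℕ∞) ≠ 0 := by exact_mod_cast hn
  set ψ := hf.implicitFunction hn' hf₂
  have hψu : ψ u.1 = u.2 := hf.implicitFunction_apply_self hn' hf₂
  have hψ : ContDiffAt 𝕜 n ψ u.1 := hf.contDiffAt_implicitFunction hn' hf₂
  obtain ⟨W, hW, hψW⟩ := hψ.contDiffOn le_rfl (by simp)
  have hgraph : {v | f v = f u ↔ ψ v.1 = v.2} ∩ V₀ ×ˢ N₀ ∈ 𝓝 (u.1, u.2) :=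
    inter_mem (hf.eventually_apply_eq_iff_implicitFunction hn' hf₂) (prod_mem_nhds hV₀ hN₀)
  obtain ⟨A, N, hA, huA, hN, huN, hAN⟩ := mem_nhds_prod_iff'.mp hgraph
  have hψN : ψ ⁻¹' N ∈ 𝓝 u.1 := hψ.continuousAt.preimage_mem_nhds (hψu ▸ hN.mem_nhds huN)
  obtain ⟨V, hVsub, hV, huV⟩ := mem_nhds_iff.mp (inter_mem (inter_mem (hA.mem_nhds huA) hW) hψN)
  refine ⟨V, fun x hx => (hAN (mk_mem_prod (hVsub hx).1.1 huN)).2.1, N,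
    fun y hy => (hAN (mk_mem_prod huA hy)).2.2, hV, hN, huV, huN, ψ,
    hψW.mono fun x hx => (hVsub hx).1.2, hψu, fun x hx => (hVsub hx).2, fun x hx y hy => ?_⟩
  rw [eq_comm (a := y)]
  exact (hAN (mk_mem_prod (hVsub hx).1.1 hy)).1

end ImplicitFunction

theorem ContinuousLinearMap.isInvertible_of_injective {𝕜 E : Type*} [NontriviallyNormedField 𝕜]
    [CompleteSpace 𝕜] [NormedAddCommGroup E] [NormedSpace 𝕜 E] [FiniteDimensional 𝕜 E]
    {f : E →L[𝕜] E} (hf : Function.Injective f) : f.IsInvertible :=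
  ⟨(LinearEquiv.ofInjectiveEndo f.toLinearMap hf).toContinuousLinearEquiv, rfl⟩

theorem sq_mul_sq_lt_of_lt_div_sqrt {σ c u : ℝ} (hσ : 0 ≤ σ) (hc : 0 ≤ c) (hcu : c < u)
    (h : σ < c / √(u ^ 2 - c ^ 2)) : σ ^ 2 * u ^ 2 < c ^ 2 * (1 + σ ^ 2) := by
  have hd : 0 < u ^ 2 - c ^ 2 := by nlinarith
  have h' : σ * √(u ^ 2 - c ^ 2) < c := (lt_div_iff₀ (Real.sqrt_pos.mpr hd)).mp h
  have := mul_self_lt_mul_self (by positivity) h'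
  rw [mul_mul_mul_comm, Real.mul_self_sqrt hd.le] at this
  nlinarith

def shockFlux (γ σ : ℝ) (U : Fin 4 → ℝ) : Fin 4 → ℝ :=
  ![U 3 * (σ * U 0 - U 1),
    U 3 * (σ * U 0 - U 1) * U 0 + σ * U 2,
    U 3 * (σ * U 0 - U 1) * U 1 - U 2,
    (σ * U 0 - U 1) * (γ * U 2 / (γ - 1) + U 3 * (U 0 ^ 2 + U 1 ^ 2) / 2)]

def shockFluxDeriv (γ σ : ℝ) (U b : Fin 4 → ℝ) : Fin 4 → ℝ :=
  let m' := b 3 * (σ * U 0 - U 1) + U 3 * (σ * b 0 - b 1)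
  ![m',
    m' * U 0 + U 3 * (σ * U 0 - U 1) * b 0 + σ * b 2,
    m' * U 1 + U 3 * (σ * U 0 - U 1) * b 1 - b 2,
    (σ * b 0 - b 1) * (γ * U 2 / (γ - 1) + U 3 * (U 0 ^ 2 + U 1 ^ 2) / 2)
      + (σ * U 0 - U 1) * (γ * b 2 / (γ - 1) + b 3 * (U 0 ^ 2 + U 1 ^ 2) / 2
        + U 3 * (U 0 * b 0 + U 1 * b 1))]

theorem smul_Wf_sub_Hf {γ : ℝ} (σ : ℝ) {U : Fin 4 → ℝ} (hγ : γ - 1 ≠ 0) (hρ : U 3 ≠ 0) :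
    σ • Wf γ U - Hf γ U = shockFlux γ σ U := by
  ext i
  fin_cases i <;>
    simp only [Wf, Hf, shockFlux, Fin.isValue, Fin.zero_eta, Fin.mk_one, Fin.reduceFinMk,
      Matrix.smul_cons, smul_eq_mul, Matrix.smul_empty, Pi.sub_apply, Matrix.cons_val_zero,
      Matrix.cons_val_one, Matrix.cons_val] <;>
    field_simp <;>
    ring

theorem contDiff_shockFlux (γ : ℝ) {n : WithTop ℕ∞} :
    ContDiff ℝ n (fun x : ℝ × (Fin 4 → ℝ) => shockFlux γ x.1 x.2) := by
  rw [contDiff_pi]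
  intro i
  fin_cases i <;>
    simp only [shockFlux, Fin.isValue, Fin.zero_eta, Fin.mk_one, Fin.reduceFinMk,
      Matrix.cons_val_zero, Matrix.cons_val_one, Matrix.cons_val] <;>
    fun_prop

theorem differentiable_shockFlux (γ σ : ℝ) : Differentiable ℝ (shockFlux γ σ) :=
  ((contDiff_shockFlux γ (n := 1)).comp (contDiff_const.prodMk contDiff_id)).differentiable
    one_ne_zero

theorem hasLineDerivAt_shockFlux (γ σ : ℝ) (U b : Fin 4 → ℝ) :
    HasLineDerivAt ℝ (shockFlux γ σ) (shockFluxDeriv γ σ U b) U b := by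
  have hcoord : ∀ j, HasDerivAt (fun t : ℝ => (U + t • b) j) (b j) 0 := fun j => by
    simpa using ((hasDerivAt_id (0 : ℝ)).mul_const (b j)).const_add (U j)
  have hmass := (hcoord 3).mul (((hcoord 0).const_mul σ).sub (hcoord 1))
  have hsq := ((hcoord 0).pow 2).add ((hcoord 1).pow 2)
  rw [HasLineDerivAt, hasDerivAt_pi]
  intro i
  fin_cases i
  · exact hmass.congr_deriv (by simp [shockFluxDeriv])
  · exact ((hmass.mul (hcoord 0)).add ((hcoord 2).const_mul σ)).congr_deriv
      (by simp [shockFluxDeriv])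
  · exact ((hmass.mul (hcoord 1)).sub (hcoord 2)).congr_deriv (by simp [shockFluxDeriv])
  · have henergy := ((hcoord 2).const_mul γ).div_const (γ - 1) |>.add
      (((hcoord 3).mul hsq).div_const 2)
    exact ((((hcoord 0).const_mul σ).sub (hcoord 1)).mul henergy).congr_deriv
      (by simp [shockFluxDeriv, -mul_eq_mul_left_iff, -mul_eq_mul_right_iff]; ring)

theorem eq_zero_of_shockFluxDeriv_eq_zero {γ σ u p ρ : ℝ} (hγ : γ - 1 ≠ 0) (hσu : σ * u ≠ 0)
    (hρ : ρ ≠ 0) (hgap : σ ^ 2 * u ^ 2 * ρ ≠ γ * p * (1 + σ ^ 2)) {b : Fin 4 → ℝ}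
    (hb : shockFluxDeriv γ σ ![u, 0, p, ρ] b = 0) : b = 0 := by
  have e0 : b 3 * (σ * u) + ρ * (σ * b 0 - b 1) = 0 := by
    simpa [shockFluxDeriv] using congrFun hb 0
  have e1 : (b 3 * (σ * u) + ρ * (σ * b 0 - b 1)) * u + ρ * (σ * u) * b 0 + σ * b 2 = 0 := by
    simpa [shockFluxDeriv] using congrFun hb 1
  have e2 : ρ * (σ * u) * b 1 - b 2 = 0 := by simpa [shockFluxDeriv] using congrFun hb 2
  have e3 : (σ * b 0 - b 1) * (2 * γ * p + (γ - 1) * ρ * u ^ 2)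
      + σ * u * (2 * γ * b 2 + (γ - 1) * u ^ 2 * b 3 + 2 * (γ - 1) * ρ * u * b 0) = 0 := by
    have h := congrFun hb 3
    simp only [shockFluxDeriv, Fin.isValue, Matrix.cons_val_zero, Matrix.cons_val_one,
      Matrix.cons_val, sub_zero, mul_zero, zero_add, add_zero, zero_mul, ne_eq,
      OfNat.ofNat_ne_zero, not_false_eq_true, zero_pow, Pi.zero_apply] at h
    field_simp at h
    linear_combination h
  have h2 : b 2 = ρ * σ * u * b 1 := by linear_combination -e2
  have h0 : b 0 = -σ * b 1 := by
    have : ρ * (σ * u) * (b 0 + σ * b 1) = 0 := by linear_combination e1 - u * e0 + σ * e2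
    linear_combination (mul_eq_zero.mp this).resolve_left (mul_ne_zero hρ hσu)
  have h3 : σ * u * b 3 = ρ * (1 + σ ^ 2) * b 1 := by linear_combination e0 - ρ * σ * h0
  -- the energy equation `e3` once `b 0`, `b 2` and `σ u b 3` are expressed through `b 1`
  have h1 : b 1 * (σ ^ 2 * u ^ 2 * ρ - γ * p * (1 + σ ^ 2)) = 0 := by
    linear_combination e3 / 2 - σ * (γ * p + 3 * (γ - 1) * ρ * u ^ 2 / 2) * h0
      - σ * u * γ * h2 - (γ - 1) * u ^ 2 / 2 * h3
  have hb1 : b 1 = 0 := (mul_eq_zero.mp h1).resolve_right (sub_ne_zero.mpr hgap)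
  have hb3 : σ * u * b 3 = 0 := by rw [h3, hb1, mul_zero]
  ext i
  fin_cases i
  · simp [h0, hb1]
  · simp [hb1]
  · simp [h2, hb1]
  · simpa [hσu] using hb3

theorem isInvertible_fderiv_shockFlux {γ σ u p ρ : ℝ} (hγ : γ - 1 ≠ 0) (hσu : σ * u ≠ 0)
    (hρ : ρ ≠ 0) (hgap : σ ^ 2 * u ^ 2 * ρ ≠ γ * p * (1 + σ ^ 2)) :
    (fderiv ℝ (shockFlux γ σ) ![u, 0, p, ρ]).IsInvertible := by
  refine ContinuousLinearMap.isInvertible_of_injective ((injective_iff_map_eq_zero _).mpr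
    fun b hb => eq_zero_of_shockFluxDeriv_eq_zero hγ hσu hρ hgap ?_)
  rw [(hasLineDerivAt_shockFlux γ σ _ b).unique
    ((differentiable_shockFlux γ σ _).hasFDerivAt.hasLineDerivAt b), hb]

def rhResidual (γ : ℝ) (x : (ℝ × (Fin 4 → ℝ)) × (Fin 4 → ℝ)) : Fin 4 → ℝ :=
  shockFlux γ x.1.1 x.2 - shockFlux γ x.1.1 x.1.2

theorem rhResidual_eq_zero_iff {γ σ : ℝ} {U₀ U : Fin 4 → ℝ} (hγ : γ - 1 ≠ 0)
    (hρ₀ : U₀ 3 ≠ 0) (hρ : U 3 ≠ 0) :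
    rhResidual γ ((σ, U₀), U) = 0 ↔ σ • (Wf γ U₀ - Wf γ U) = Hf γ U₀ - Hf γ U := by
  rw [rhResidual, sub_eq_zero, ← smul_Wf_sub_Hf σ hγ hρ₀, ← smul_Wf_sub_Hf σ hγ hρ, smul_sub,
    eq_comm, sub_eq_sub_iff_sub_eq_sub]

theorem contDiff_rhResidual (γ : ℝ) {n : WithTop ℕ∞} : ContDiff ℝ n (rhResidual γ) := by
  have h := contDiff_shockFlux γ (n := n)
  unfold rhResidual
  fun_prop

theorem fderiv_rhResidual_comp_inr (γ : ℝ) (q : ℝ × (Fin 4 → ℝ)) (U : Fin 4 → ℝ) :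
    fderiv ℝ (rhResidual γ) (q, U) ∘L .inr ℝ _ _ = fderiv ℝ (shockFlux γ q.1) U := by
  have h := ((contDiff_rhResidual γ (n := 1)).differentiable one_ne_zero (q, U)).hasFDerivAt.comp U
    (hasFDerivAt_prodMk_right q U)
  exact h.unique ((differentiable_shockFlux γ q.1 U).hasFDerivAt.sub_const (shockFlux γ q.1 q.2))

theorem shock4_reverse_polar_parameterization_general
    (γ u_a v_a p_a ρ_a u₂ p₂ ρ₂ σ₄₀ : ℝ) (hγ : 1 < γ)
    (hρa : 0 < ρ_a) (hρ2 : 0 < ρ₂) (hp2 : 0 < p₂)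
    (c₂ : ℝ) (hc₂ : c₂ = Real.sqrt (γ * p₂ / ρ₂)) (hsup : c₂ < u₂)
    (Ua U₂ : Fin 4 → ℝ) (hUa : Ua = ![u_a, v_a, p_a, ρ_a]) (hU₂ : U₂ = ![u₂, 0, p₂, ρ₂])
    (hσ1 : 0 < σ₄₀) (hσ2 : σ₄₀ < c₂ / Real.sqrt (u₂ ^ 2 - c₂ ^ 2))
    (hRH : σ₄₀ • (Wf γ Ua - Wf γ U₂) = Hf γ Ua - Hf γ U₂) :
    ∃ (N₁ : Set ℝ) (N₂ N₃ : Set (Fin 4 → ℝ)),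
      IsOpen N₁ ∧ IsOpen N₂ ∧ IsOpen N₃ ∧
      σ₄₀ ∈ N₁ ∧ Ua ∈ N₂ ∧ U₂ ∈ N₃ ∧
      ∃ G₄ : ℝ → (Fin 4 → ℝ) → (Fin 4 → ℝ),
        ContDiffOn ℝ 1 (fun q : ℝ × (Fin 4 → ℝ) => G₄ q.1 q.2) (N₁ ×ˢ N₂) ∧
        G₄ σ₄₀ Ua = U₂ ∧
        (∀ σ ∈ N₁, ∀ U₀ ∈ N₂, G₄ σ U₀ ∈ N₃) ∧
        (∀ σ ∈ N₁, ∀ U₀ ∈ N₂, ∀ U ∈ N₃,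
          (σ • (Wf γ U₀ - Wf γ U) = Hf γ U₀ - Hf γ U ↔ U = G₄ σ U₀)) := by
  have hγ1 : γ - 1 ≠ 0 := sub_ne_zero.mpr hγ.ne'
  have hc₂_nonneg : 0 ≤ c₂ := hc₂ ▸ Real.sqrt_nonneg _
  have hc₂sq : c₂ ^ 2 * ρ₂ = γ * p₂ := by
    rw [hc₂, Real.sq_sqrt (by positivity)]; field_simp
  have hgap : σ₄₀ ^ 2 * u₂ ^ 2 * ρ₂ < γ * p₂ * (1 + σ₄₀ ^ 2) := by
    have := sq_mul_sq_lt_of_lt_div_sqrt hσ1.le hc₂_nonneg hsup hσ2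
    rw [← hc₂sq]; nlinarith
  have hinv : (fderiv ℝ (rhResidual γ) ((σ₄₀, Ua), U₂) ∘L .inr ℝ _ _).IsInvertible := by
    rw [fderiv_rhResidual_comp_inr, hU₂]
    have hu₂ : 0 < u₂ := hc₂_nonneg.trans_lt hsup
    exact isInvertible_fderiv_shockFlux hγ1 (by positivity) hρ2.ne' hgap.ne
  have hρ_open : IsOpen {U : Fin 4 → ℝ | U 3 ≠ 0} :=
    isOpen_ne_fun (continuous_apply 3) continuous_const
  obtain ⟨V, hV₀, N₃, hN₃₀, hV, hN₃, hV_mem, hN₃_mem, ψ, hψ, hψ_base, hψ_maps, hψ_iff⟩ :=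
    ((contDiff_rhResidual γ).contDiffAt (x := ((σ₄₀, Ua), U₂))).exists_isOpen_implicitFunction
      one_ne_zero hinv (V₀ := Prod.snd ⁻¹' {U | U 3 ≠ 0}) (N₀ := {U | U 3 ≠ 0})
      ((hρ_open.preimage continuous_snd).mem_nhds (by simp [hUa, hρa.ne']))
      (hρ_open.mem_nhds (by simp [hU₂, hρ2.ne']))
  obtain ⟨N₁, N₂, hN₁, hN₂, hσ_mem, hUa_mem, hN_sub⟩ := isOpen_prod_iff.mp hV σ₄₀ Ua hV_mem
  have hbase : rhResidual γ ((σ₄₀, Ua), U₂) = 0 :=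
    (rhResidual_eq_zero_iff hγ1 (by simp [hUa, hρa.ne']) (by simp [hU₂, hρ2.ne'])).mpr hRH
  refine ⟨N₁, N₂, N₃, hN₁, hN₂, hN₃, hσ_mem, hUa_mem, hN₃_mem, fun σ U₀ => ψ (σ, U₀),
    hψ.mono hN_sub, hψ_base, fun σ hσ U₀ hU₀ => hψ_maps (hN_sub ⟨hσ, hU₀⟩),
    fun σ hσ U₀ hU₀ U hU => ?_⟩
  have hρ₀ : U₀ 3 ≠ 0 := hV₀ (hN_sub (mk_mem_prod hσ hU₀))
  rw [← rhResidual_eq_zero_iff hγ1 hρ₀ (hN₃₀ hU), ← hbase]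
  exact hψ_iff _ (hN_sub ⟨hσ, hU₀⟩) U hU

/-- Local parameterization of the reverse 4-shock polar by shock speed: near a strong
4-shock `(σ₄₀, U_a, U₂)`, the Rankine–Hugoniot conditions are locally uniquely solvable
for the below state `U` as a `C¹` function `G₄(σ, U₀)` of the speed and the above state. -/
theorem shock4_reverse_polar_parameterization
    (γ u_a v_a p_a ρ_a u₂ p₂ ρ₂ σ₄₀ : ℝ) (hγ : 1 < γ)
    (hρa : 0 < ρ_a) (hρ2 : 0 < ρ₂) (hpa : 0 < p_a) (hp2 : 0 < p₂)
    (c₂ : ℝ) (hc₂ : c₂ = Real.sqrt (γ * p₂ / ρ₂)) (hsup : c₂ < u₂)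
    (Ua U₂ : Fin 4 → ℝ) (hUa : Ua = ![u_a, v_a, p_a, ρ_a]) (hU₂ : U₂ = ![u₂, 0, p₂, ρ₂])
    (hσ1 : 0 < σ₄₀) (hσ2 : σ₄₀ < c₂ / Real.sqrt (u₂ ^ 2 - c₂ ^ 2))
    (hRH : σ₄₀ • (Wf γ Ua - Wf γ U₂) = Hf γ Ua - Hf γ U₂) :
    ∃ (N₁ : Set ℝ) (N₂ N₃ : Set (Fin 4 → ℝ)),
      IsOpen N₁ ∧ IsOpen N₂ ∧ IsOpen N₃ ∧
      σ₄₀ ∈ N₁ ∧ Ua ∈ N₂ ∧ U₂ ∈ N₃ ∧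
      ∃ G₄ : ℝ → (Fin 4 → ℝ) → (Fin 4 → ℝ),
        ContDiffOn ℝ 1 (fun q : ℝ × (Fin 4 → ℝ) => G₄ q.1 q.2) (N₁ ×ˢ N₂) ∧
        G₄ σ₄₀ Ua = U₂ ∧
        (∀ σ ∈ N₁, ∀ U₀ ∈ N₂, G₄ σ U₀ ∈ N₃) ∧
        (∀ σ ∈ N₁, ∀ U₀ ∈ N₂, ∀ U ∈ N₃,
          (σ • (Wf γ U₀ - Wf γ U) = Hf γ U₀ - Hf γ U ↔ U = G₄ σ U₀)) :=
  shock4_reverse_polar_parameterization_general γ u_a v_a p_a ρ_a u₂ p₂ ρ₂ σ₄₀ hγ hρa hρ2 hp2 c₂ hc₂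
    hsup Ua U₂ hUa hU₂ hσ1 hσ2 hRH
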